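/- Work on Minkowski spacetime ℝ^4 with inertial coordinates (x^0,x^1,x^2,x^3), metric components η = diag(−1,1,1,1), lowered coordinates x_a = η_{ab} x^b (so dx_a = η_{ab} dx^b), and volume form Ω = dx^0 ∧ dx^1 ∧ dx^2 ∧ dx^3. Let τ assign to each smooth vector field v a smooth 3-form τ_v, additively and C^∞(ℝ^4)-linearly in v. Fix indices a ≠ b and suppose dτ_{∂_a} = 0 and dτ_{∂_b} = 0. Define smooth functions T_{cd} by dx_d ∧ τ_{∂_c} = T_{cd} · Ω, and set τ_{R_{ab}} = x_a τ_{∂_b} − x_b τ_{∂_a} (the value of τ on the rotation/boost Killing field R_{ab} = x_a ∂_b − x_b ∂_a, by C^∞-linearity). Then dτ_{R_{ab}} = (T_{ba} − T_{ab}) · Ω; in particular T_{ab} = T_{ba} if and only if dτ_{R_{ab}} = 0. -/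

import Mathlib

/- Smooth differential forms.  Lacking a theory of exterior calculus on abstract
manifolds in Mathlib, the manifold `M` is taken to be (an `n`-dimensional) real
vector space; a smooth `p`-form is a map assigning to each point a real-valued
alternating multilinear function of `p` tangent vectors, smooth in the point.
The exterior derivative, interior contraction (`(i_v α)(v₁,…) = α(v, v₁, …)`) and
the wedge product (in the shuffle/determinant convention) are the standard ones. -/

open scoped BigOperators

noncomputable section

namespace DF

variable {E : Type*} [NormedAddCommGroup E] [NormedSpace ℝ E]

/-- A raw `p`-form on `E`: a function of a point and of `p` tangent vectors. -/
abbrev Raw (E : Type*) (p : ℕ) := E → (Fin p → E) → ℝ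

/-- `ω` is a smooth differential `p`-form: at every point it is an alternating
multilinear map of its `p` vector arguments, and it is smooth in the point. -/
def IsForm {p : ℕ} (ω : Raw E p) : Prop :=
  (∀ x : E, ∃ A : E [⋀^Fin p]→ₗ[ℝ] ℝ, ∀ v, ω x v = A v) ∧
    ∀ v : Fin p → E, ContDiff ℝ (⊤ : ℕ∞) fun x => ω x v

/-- The exterior derivative:
`(dω)(x)(v₀,…,v_p) = Σ_i (−1)^i (D_{v_i} ω)(x)(v₀,…,v̂_i,…,v_p)`. -/
noncomputable def extd {p : ℕ} (ω : Raw E p) : Raw E (p + 1) :=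
  fun x v => ∑ i : Fin (p + 1),
    (-1 : ℝ) ^ (i : ℕ) * fderiv ℝ (fun y => ω y fun j => v (i.succAbove j)) x (v i)

/-- Interior contraction with the vector field `w`:
`(i_w ω)(x)(v₁,…,v_p) = ω(x)(w x, v₁, …, v_p)`. -/
def ic {p : ℕ} (w : E → E) (ω : Raw E (p + 1)) : Raw E p :=
  fun x v => ω x (Fin.cons (w x) v)

/-- The wedge product (shuffle/determinant convention):
`(α ∧ β)(v) = (1/(p! q!)) Σ_{σ ∈ S_{p+q}} sgn σ · α(v_{σ(1)},…,v_{σ(p)}) β(v_{σ(p+1)},…)`. -/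
noncomputable def wg {p q : ℕ} (α : Raw E p) (β : Raw E q) : Raw E (p + q) :=
  fun x v => ((p.factorial * q.factorial : ℕ) : ℝ)⁻¹ *
    ∑ σ : Equiv.Perm (Fin (p + q)), ((Equiv.Perm.sign σ : ℤ) : ℝ) *
      (α x fun i => v (σ (Fin.castAdd q i))) * (β x fun j => v (σ (Fin.natAdd p j)))

/-- Re-indexing a raw form along an equality of degrees. -/
def castR {m k : ℕ} (h : m = k) (ω : Raw E m) : Raw E k :=
  fun x v => ω x fun i => v (Fin.cast h i)

/-- The differential `df` of a function, as a 1-form. -/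
noncomputable def d0 (f : E → ℝ) : Raw E 1 :=
  extd (fun x (_ : Fin 0 → E) => f x)

end DF

/-- Minkowski spacetime `ℝ⁴` (as a manifold). -/
abbrev Mink := EuclideanSpace ℝ (Fin 4)

/-- The Minkowski metric components `η = diag(−1,1,1,1)`. -/
def eta (a : Fin 4) : ℝ := if a = 0 then -1 else 1

/-- The lowered coordinate function `x_a = η_{ab} x^b`. -/
def xLow (a : Fin 4) (x : Mink) : ℝ := eta a * x a

/-- The lowered coordinate 1-form `dx_a = η_{ab} dx^b`. -/
def dxLow (a : Fin 4) : DF.Raw Mink 1 := fun _ v => eta a * v 0 a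

/-- The coordinate vector field `∂_a`. -/
def coordVF (a : Fin 4) : Mink → Mink := fun _ => EuclideanSpace.single a (1 : ℝ)

/-- The volume form `Ω = dx^0 ∧ dx^1 ∧ dx^2 ∧ dx^3` on `ℝ⁴`. -/
noncomputable def vol4 : DF.Raw Mink 4 := fun _ v => Matrix.det (Matrix.of fun i j => v j i)


section Aux


lemma keyp (A : Mink [⋀^Fin 3]→ₗ[ℝ] ℝ) (v : Fin 4 → Mink) (p : Fin 4) :
    (if p = 0 then (1:ℝ) else -1) * A (fun j => v (Equiv.swap 0 p j.succ))
      = (-1:ℝ)^(p:ℕ) * A (fun j => v (p.succAbove j)) := by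
  fin_cases p <;> simp only []
  · rw [if_pos (show (⟨0, by norm_num⟩ : Fin 4) = 0 by decide), show (fun j : Fin 3 => v (Equiv.swap 0 (⟨0, by norm_num⟩ : Fin 4) j.succ))
        = (fun j => v ((⟨0, by norm_num⟩ : Fin 4).succAbove j)) from
      by funext j; fin_cases j <;> rfl]
    norm_num
  · rw [if_neg (by decide), show (fun j : Fin 3 => v (Equiv.swap 0 (⟨1, by norm_num⟩ : Fin 4) j.succ))
        = (fun j => v ((⟨1, by norm_num⟩ : Fin 4).succAbove j)) from
      by funext j; fin_cases j <;> rfl]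
    norm_num
  · rw [if_neg (by decide), show (fun j : Fin 3 => v (Equiv.swap 0 (⟨2, by norm_num⟩ : Fin 4) j.succ))
        = (fun j => v ((⟨2, by norm_num⟩ : Fin 4).succAbove j)) ∘ (Equiv.swap 0 1 : Equiv.Perm (Fin 3)) from
      by funext j; fin_cases j <;> rfl,
      AlternatingMap.map_perm, Equiv.Perm.sign_swap (by decide)]
    norm_num
  · rw [if_neg (by decide), show (fun j : Fin 3 => v (Equiv.swap 0 (⟨3, by norm_num⟩ : Fin 4) j.succ))
        = (fun j => v ((⟨3, by norm_num⟩ : Fin 4).succAbove j)) ∘ (finRotate 3) from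
      by funext j; fin_cases j <;> rfl,
      AlternatingMap.map_perm, sign_finRotate]
    norm_num

lemma comb (A : Mink [⋀^Fin 3]→ₗ[ℝ] ℝ) (f : Mink → ℝ) (v : Fin 4 → Mink) :
    (∑ σ : Equiv.Perm (Fin 4), ((Equiv.Perm.sign σ : ℤ) : ℝ) *
        f (v (σ (Fin.castAdd 3 0))) * A (fun j => v (σ (Fin.natAdd 1 j))))
      = 6 * ∑ i : Fin 4, (-1:ℝ)^(i:ℕ) * f (v i) * A (fun j => v (i.succAbove j)) := by
  have hna : ∀ j : Fin 3, (Fin.natAdd 1 j : Fin 4) = j.succ := by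
    intro j; ext; simp [Nat.add_comm]
  have hca : (Fin.castAdd 3 (0 : Fin 1) : Fin 4) = 0 := rfl
  rw [← Equiv.sum_comp (Equiv.Perm.decomposeFin (n := 3)).symm, Fintype.sum_prod_type]
  have step : ∀ (p : Fin 4) (e : Equiv.Perm (Fin 3)),
      ((Equiv.Perm.sign (Equiv.Perm.decomposeFin.symm (p, e)) : ℤ) : ℝ) *
        f (v (Equiv.Perm.decomposeFin.symm (p, e) (Fin.castAdd 3 0))) *
        A (fun j => v (Equiv.Perm.decomposeFin.symm (p, e) (Fin.natAdd 1 j)))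
      = (-1:ℝ)^(p:ℕ) * f (v p) * A (fun j => v (p.succAbove j)) := by
    intro p e
    have h2 : (fun j => v (Equiv.Perm.decomposeFin.symm (p, e) (Fin.natAdd 1 j)))
        = (fun j => v (Equiv.swap 0 p j.succ)) ∘ e := by
      funext j
      simp [hna, Equiv.Perm.decomposeFin_symm_apply_succ]
    rw [hca, Equiv.Perm.decomposeFin_symm_apply_zero, h2, AlternatingMap.map_perm,
      Equiv.Perm.decomposeFin.symm_sign]
    have hk := keyp A v p
    rcases Int.units_eq_one_or (Equiv.Perm.sign e) with h | h <;>
      rcases eq_or_ne p 0 with hp | hp <;>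
      simp [h, hp] at hk ⊢ <;> linear_combination (f (v p)) * hk
  simp only [step, Finset.sum_const, Finset.card_univ, Fintype.card_perm, Fintype.card_fin,
    Nat.factorial, smul_eq_mul, nsmul_eq_mul]
  rw [Finset.mul_sum]
  norm_num


lemma xLow_fderiv (c : Fin 4) (x u : Mink) : fderiv ℝ (xLow c) x u = eta c * u c := by
  have h : HasFDerivAt (xLow c) ((eta c) • (EuclideanSpace.proj c : Mink →L[ℝ] ℝ)) x := by
    exact ((EuclideanSpace.proj c : Mink →L[ℝ] ℝ).hasFDerivAt).const_smul (eta c)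
  rw [h.fderiv]
  simp [smul_eq_mul]

lemma xLow_diff (c : Fin 4) (x : Mink) : DifferentiableAt ℝ (xLow c) x :=
  (((EuclideanSpace.proj c : Mink →L[ℝ] ℝ).hasFDerivAt).const_smul (eta c)).differentiableAt

lemma fderiv_xmul (c : Fin 4) (g : Mink → ℝ) (x u : Mink) (hg : DifferentiableAt ℝ g x) :
    fderiv ℝ (fun y => xLow c y * g y) x u
      = eta c * u c * g x + xLow c x * fderiv ℝ g x u := by
  rw [fderiv_fun_mul (xLow_diff c x) hg]
  simp [ContinuousLinearMap.add_apply, ContinuousLinearMap.smul_apply, xLow_fderiv]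
  ring

lemma wg_eval (ω : DF.Raw Mink 3) (A : Mink [⋀^Fin 3]→ₗ[ℝ] ℝ) (x : Mink)
    (hA : ∀ u, ω x u = A u) (c : Fin 4) (v : Fin 4 → Mink) :
    DF.wg (dxLow c) ω x v
      = ∑ i : Fin 4, (-1:ℝ)^(i:ℕ) * (eta c * v i c) * ω x (fun j => v (i.succAbove j)) := by
  unfold DF.wg dxLow
  simp only [hA]
  rw [show (∑ σ : Equiv.Perm (Fin (1+3)), ((Equiv.Perm.sign σ : ℤ) : ℝ) *
      (eta c * v (σ (Fin.castAdd 3 0)) c) * A (fun j => v (σ (Fin.natAdd 1 j))))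
      = 6 * ∑ i : Fin 4, (-1:ℝ)^(i:ℕ) * ((fun u => eta c * u c) (v i)) * A (fun j => v (i.succAbove j))
    from comb A (fun u => eta c * u c) v]
  norm_num [Nat.factorial]
  ring

end Aux


/-- On Minkowski spacetime `ℝ⁴`, let `τ` assign (additively and
`C^∞`-linearly) to each smooth vector field `v` a smooth 3-form `τ_v`.  Fix `a ≠ b`,
suppose `dτ_{∂_a} = 0` and `dτ_{∂_b} = 0`, and define `T_{cd}` by
`dx_d ∧ τ_{∂_c} = T_{cd} • Ω`.  With
`τ_{R_{ab}} = x_a τ_{∂_b} − x_b τ_{∂_a}` (the value of `τ` on the Killing field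
`R_{ab} = x_a ∂_b − x_b ∂_a`, by `C^∞`-linearity), one has
`dτ_{R_{ab}} = (T_{ba} − T_{ab}) • Ω`; in particular `T_{ab} = T_{ba}` iff
`dτ_{R_{ab}} = 0`. -/
theorem statement19 (τ : (Mink → Mink) → DF.Raw Mink 3)
    (hform : ∀ w, ContDiff ℝ (⊤ : ℕ∞) w → DF.IsForm (τ w))
    (hadd : ∀ w₁ w₂, ContDiff ℝ (⊤ : ℕ∞) w₁ → ContDiff ℝ (⊤ : ℕ∞) w₂ → τ (w₁ + w₂) = τ w₁ + τ w₂)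
    (hsmul : ∀ (f : Mink → ℝ), ContDiff ℝ (⊤ : ℕ∞) f → ∀ w, ContDiff ℝ (⊤ : ℕ∞) w →
      τ (fun x => f x • w x) = fun x u => f x * τ w x u)
    (a b : Fin 4) (hab : a ≠ b)
    (hda : DF.extd (τ (coordVF a)) = 0) (hdb : DF.extd (τ (coordVF b)) = 0)
    (T : Fin 4 → Fin 4 → Mink → ℝ)
    (hT : ∀ c d : Fin 4, DF.wg (dxLow d) (τ (coordVF c)) = fun x v => T c d x * vol4 x v) :
    DF.extd (fun x u => xLow a x * τ (coordVF b) x u - xLow b x * τ (coordVF a) x u)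
        = (fun x v => (T b a x - T a b x) * vol4 x v) ∧
      ((T a b = T b a) ↔
        DF.extd (fun x u => xLow a x * τ (coordVF b) x u - xLow b x * τ (coordVF a) x u)
          = 0) := by
  have hca : ContDiff ℝ (⊤ : ℕ∞) (coordVF a) := contDiff_const
  have hcb : ContDiff ℝ (⊤ : ℕ∞) (coordVF b) := contDiff_const
  have hfa := hform _ hca
  have hfb := hform _ hcb
  have main : DF.extd (fun x u => xLow a x * τ (coordVF b) x u - xLow b x * τ (coordVF a) x u)
      = (fun x v => (T b a x - T a b x) * vol4 x v) := by
    funext x v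
    obtain ⟨Aa, hAa⟩ := hfa.1 x
    obtain ⟨Ab, hAb⟩ := hfb.1 x
    have hda' : DF.extd (τ (coordVF a)) x v = 0 := by rw [hda]; rfl
    have hdb' : DF.extd (τ (coordVF b)) x v = 0 := by rw [hdb]; rfl
    have hdiffa : ∀ w : Fin 3 → Mink, ∀ y : Mink, DifferentiableAt ℝ (fun z => τ (coordVF a) z w) y :=
      fun w y => ((hfa.2 w).differentiable (by simp)).differentiableAt
    have hdiffb : ∀ w : Fin 3 → Mink, ∀ y : Mink, DifferentiableAt ℝ (fun z => τ (coordVF b) z w) y :=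
      fun w y => ((hfb.2 w).differentiable (by simp)).differentiableAt
    have hterm : ∀ i : Fin 4,
        fderiv ℝ (fun y => xLow a y * τ (coordVF b) y (fun j => v (i.succAbove j))
            - xLow b y * τ (coordVF a) y (fun j => v (i.succAbove j))) x (v i)
        = (eta a * v i a * τ (coordVF b) x (fun j => v (i.succAbove j))
              + xLow a x * fderiv ℝ (fun y => τ (coordVF b) y (fun j => v (i.succAbove j))) x (v i))
          - (eta b * v i b * τ (coordVF a) x (fun j => v (i.succAbove j))
              + xLow b x * fderiv ℝ (fun y => τ (coordVF a) y (fun j => v (i.succAbove j))) x (v i)) := by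
      intro i
      rw [fderiv_fun_sub ((xLow_diff a x).fun_mul (hdiffb _ x)) ((xLow_diff b x).fun_mul (hdiffa _ x)),
        ContinuousLinearMap.sub_apply, fderiv_xmul a _ x (v i) (hdiffb _ x), fderiv_xmul b _ x (v i) (hdiffa _ x)]
    show (∑ i : Fin 4, (-1:ℝ)^(i:ℕ) * fderiv ℝ (fun y => xLow a y * τ (coordVF b) y (fun j => v (i.succAbove j))
            - xLow b y * τ (coordVF a) y (fun j => v (i.succAbove j))) x (v i)) = _
    calc (∑ i : Fin 4, (-1:ℝ)^(i:ℕ) * fderiv ℝ (fun y => xLow a y * τ (coordVF b) y (fun j => v (i.succAbove j))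
            - xLow b y * τ (coordVF a) y (fun j => v (i.succAbove j))) x (v i))
        = ∑ i : Fin 4,
            ((-1:ℝ)^(i:ℕ) * (eta a * v i a) * τ (coordVF b) x (fun j => v (i.succAbove j))
              + xLow a x * ((-1:ℝ)^(i:ℕ) * fderiv ℝ (fun y => τ (coordVF b) y (fun j => v (i.succAbove j))) x (v i))
              - ((-1:ℝ)^(i:ℕ) * (eta b * v i b) * τ (coordVF a) x (fun j => v (i.succAbove j))
              + xLow b x * ((-1:ℝ)^(i:ℕ) * fderiv ℝ (fun y => τ (coordVF a) y (fun j => v (i.succAbove j))) x (v i)))) := by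
          refine Finset.sum_congr rfl fun i _ => ?_
          rw [hterm i]; ring
      _ = (∑ i : Fin 4, (-1:ℝ)^(i:ℕ) * (eta a * v i a) * τ (coordVF b) x (fun j => v (i.succAbove j)))
            + xLow a x * DF.extd (τ (coordVF b)) x v
            - ((∑ i : Fin 4, (-1:ℝ)^(i:ℕ) * (eta b * v i b) * τ (coordVF a) x (fun j => v (i.succAbove j)))
            + xLow b x * DF.extd (τ (coordVF a)) x v) := by
          unfold DF.extd
          rw [Finset.sum_sub_distrib, Finset.sum_add_distrib, Finset.sum_add_distrib,
            ← Finset.mul_sum, ← Finset.mul_sum]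
      _ = DF.wg (dxLow a) (τ (coordVF b)) x v - DF.wg (dxLow b) (τ (coordVF a)) x v := by
          rw [hda', hdb', wg_eval _ Ab x hAb, wg_eval _ Aa x hAa]; ring
      _ = (T b a x - T a b x) * vol4 x v := by
          rw [hT b a, hT a b]; ring
  refine ⟨main, ?_, ?_⟩
  · intro h
    rw [main]
    funext x v
    rw [h]
    simp
  · intro h
    rw [main] at h
    funext x
    have h1 := congrFun (congrFun h x) (fun j => EuclideanSpace.single j (1:ℝ))
    have hvol : vol4 x (fun j => EuclideanSpace.single j (1:ℝ)) = 1 := by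
      unfold vol4
      rw [show (Matrix.of fun i j => EuclideanSpace.single j (1:ℝ) i) = (1 : Matrix (Fin 4) (Fin 4) ℝ) from ?_]
      · exact Matrix.det_one
      · ext i j
        simp [EuclideanSpace.single_apply, Matrix.one_apply, eq_comm]
    rw [hvol] at h1
    simp at h1
    linarith
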